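/- For each α ∈ {+,−} and each p ≥ 0, there exists a unique derivation D_{α,p} : 𝒜 → 𝒜 commuting with Λ such that, extending D_{α,p} entrywise and coefficientwise to matrices over 𝒜[λ, λ^{-1}] (so that D_{α,p}(λ) = 0), one has D_{α,p}(U(λ)) = Λ(V_{α,p}(λ))·U(λ) − U(λ)·V_{α,p}(λ). Moreover, this derivation acts on the generators by D_{+,p}(r_n) = r_n Λ(a_{+,p}) + Λ(b_{+,p}) + δ_{p,0} r_n, D_{+,p}(q_n) = q_n Λ(a_{+,p}) − Λ(c_{+,p}), D_{−,p}(r_n) = −r_n Λ(a_{−,p}) − Λ(b_{−,p}), D_{−,p}(q_n) = −q_n Λ(a_{−,p}) + Λ(c_{−,p}) + δ_{p,0} q_n. -/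

import Mathlib

noncomputable section

open PowerSeries

open scoped Classical

/-- The polynomial ring `𝒜 = ℚ[q_{n+i}, r_{n+i} : i ∈ ℤ]`; the variable `(true, i)`
is `q_{n+i}` and `(false, i)` is `r_{n+i}`. -/
abbrev A : Type := MvPolynomial (Bool × ℤ) ℚ

/-- The generator `q_{n+i}`. -/
def qv (i : ℤ) : A := MvPolynomial.X (true, i)

/-- The generator `r_{n+i}`. -/
def rv (i : ℤ) : A := MvPolynomial.X (false, i)

/-- The shift operator `Λ`, determined by `Λ(q_{n+i}) = q_{n+i+1}`, `Λ(r_{n+i}) = r_{n+i+1}`. -/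
def Lam : A →+* A :=
  (MvPolynomial.rename (fun bi : Bool × ℤ => (bi.1, bi.2 + 1))).toRingHom

/-- Formal power series over `𝒜` (in `λ`, or in `λ⁻¹`, depending on the context). -/
abbrev S : Type := PowerSeries A

/-- 2×2 matrices over `𝒜[[λ]]` (resp. `𝒜[[λ⁻¹]]`). -/
abbrev M2 : Type := Matrix (Fin 2) (Fin 2) S

/-- `Λ` acting coefficientwise on formal power series. -/
def LamS : S →+* S := PowerSeries.map Lam

/-- The Lax matrix `U(λ) = ((λ, r_n), (λ q_n, 1))`, as a matrix over `𝒜[[λ]]`. -/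
def Umat : M2 :=
  !![PowerSeries.X, PowerSeries.C (rv 0);
     PowerSeries.X * PowerSeries.C (qv 0), 1]

/-- The Lax matrix multiplied by `λ⁻¹`, i.e. `λ⁻¹·U(λ) = ((1, λ⁻¹ r_n), (q_n, λ⁻¹))`,
as a matrix over `𝒜[[λ⁻¹]]` (here `PowerSeries.X` stands for `λ⁻¹`). -/
def UmatInf : M2 :=
  !![1, PowerSeries.X * PowerSeries.C (rv 0);
     PowerSeries.C (qv 0), PowerSeries.X]

/-- `R` is the basic matrix resolvent at `λ = 0`: it is a matrix resolvent
(`Λ(R(λ))·U(λ) = U(λ)·R(λ)`), `R ≡ ((0, r_{n-1}), (0, 1)) mod λ`, `tr R = 1`, `det R = 0`. -/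
def IsResMinus (R : M2) : Prop :=
  R.map (⇑LamS) * Umat = Umat * R ∧
  R.map (⇑(PowerSeries.constantCoeff)) = !![0, rv (-1); 0, 1] ∧
  R 0 0 + R 1 1 = 1 ∧
  R 0 0 * R 1 1 - R 0 1 * R 1 0 = 0

/-- `R` is the basic matrix resolvent at `λ = ∞`: it is a matrix resolvent
(the equation `Λ(R(λ))·U(λ) = U(λ)·R(λ)` is multiplied by `λ⁻¹`, so that it takes place
in matrices over `𝒜[[λ⁻¹]]`), `R ≡ ((1, 0), (q_{n-1}, 0)) mod λ⁻¹`, `tr R = 1`, `det R = 0`. -/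
def IsResPlus (R : M2) : Prop :=
  R.map (⇑LamS) * UmatInf = UmatInf * R ∧
  R.map (⇑(PowerSeries.constantCoeff)) = !![1, 0; qv (-1), 0] ∧
  R 0 0 + R 1 1 = 1 ∧
  R 0 0 * R 1 1 - R 0 1 * R 1 0 = 0

/-- The `p`-th coefficient matrix of a matrix of power series. -/
def coefM (R : M2) (p : ℕ) : Matrix (Fin 2) (Fin 2) A :=
  Matrix.of fun i j => PowerSeries.coeff p (R i j)

/-- The coefficients `a_{α,p}` (with `α = + ↔ true`, `α = - ↔ false`). -/
def aC (Rm Rp : M2) (α : Bool) (p : ℕ) : A :=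
  if α then coefM Rp p 0 0 - (if p = 0 then 1 else 0) else coefM Rm p 0 0

/-- The coefficients `b_{α,p}`. -/
def bC (Rm Rp : M2) (α : Bool) (p : ℕ) : A :=
  if α then coefM Rp p 0 1 else coefM Rm p 0 1

/-- The coefficients `c_{α,p}`. -/
def cC (Rm Rp : M2) (α : Bool) (p : ℕ) : A :=
  if α then coefM Rp p 1 0 else coefM Rm p 1 0

/-- `U(λ) = U0 + λ·U1`: constant part. -/
def U0 : Matrix (Fin 2) (Fin 2) A := !![0, rv 0; 0, 1]

/-- `U(λ) = U0 + λ·U1`: linear part. -/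
def U1 : Matrix (Fin 2) (Fin 2) A := !![1, 0; qv 0, 0]

/-- The coefficient at `λ^m` (`m ∈ ℤ`) of the Laurent-polynomial matrix `V_{α,p}(λ)`,
where `V_{-,p}(λ) = (λ^{-p}R_-(λ))_{≤0} - ((a_{-,p}, b_{-,p}), (0,0))` and
`V_{+,p}(λ) = (λ^{p}R_+(λ))_{≥0} - ((0,0), (c_{+,p}, -a_{+,p}))`. -/
def Vc (Rm Rp : M2) (α : Bool) (p : ℕ) (m : ℤ) : Matrix (Fin 2) (Fin 2) A :=
  if α then
    (if 0 ≤ m ∧ m ≤ (p : ℤ) then coefM Rp ((p : ℤ) - m).toNat else 0)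
      - (if m = 0 then !![0, 0; cC Rm Rp true p, - aC Rm Rp true p] else 0)
  else
    (if -(p : ℤ) ≤ m ∧ m ≤ 0 then coefM Rm (m + (p : ℤ)).toNat else 0)
      - (if m = 0 then !![aC Rm Rp false p, bC Rm Rp false p; 0, 0] else 0)

/-- The coefficient at `λ^m` (`m ∈ ℤ`) of `D(U(λ))`, where `D(λ) = 0`, i.e. of
`((0, D r_n), (λ·D q_n, 0))`. -/
def DUcoef (D : Derivation ℚ A A) (m : ℤ) : Matrix (Fin 2) (Fin 2) A :=
  if m = 0 then !![0, D (rv 0); 0, 0]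
  else if m = 1 then !![0, 0; D (qv 0), 0] else 0

/-- The equation `D(U(λ)) = Λ(V_{α,p}(λ))·U(λ) - U(λ)·V_{α,p}(λ)`, written coefficientwise
in powers of `λ` (both sides are Laurent polynomials in `λ` with matrix coefficients). -/
def DUeq (Rm Rp : M2) (α : Bool) (p : ℕ) (D : Derivation ℚ A A) : Prop :=
  ∀ m : ℤ,
    DUcoef D m =
      (Vc Rm Rp α p m).map Lam * U0 + (Vc Rm Rp α p (m - 1)).map Lam * U1
        - U0 * Vc Rm Rp α p m - U1 * Vc Rm Rp α p (m - 1)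

/-- `D` commutes with the shift `Λ`. -/
def CommutesLam (D : Derivation ℚ A A) : Prop := ∀ f : A, D (Lam f) = Lam (D f)

/-- The action of `D_{α,p}` on the generators `r_n`, `q_n`. -/
def GenEqs (Rm Rp : M2) (α : Bool) (p : ℕ) (D : Derivation ℚ A A) : Prop :=
  if α then
    D (rv 0) = rv 0 * Lam (aC Rm Rp true p) + Lam (bC Rm Rp true p)
        + (if p = 0 then rv 0 else 0) ∧
    D (qv 0) = qv 0 * Lam (aC Rm Rp true p) - Lam (cC Rm Rp true p)
  else
    D (rv 0) = -(rv 0 * Lam (aC Rm Rp false p)) - Lam (bC Rm Rp false p) ∧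
    D (qv 0) = -(qv 0 * Lam (aC Rm Rp false p)) + Lam (cC Rm Rp false p)
        + (if p = 0 then qv 0 else 0)

/-- `D` is the Ablowitz–Ladik derivation `D_{α,p}`: the unique derivation of `𝒜`
commuting with `Λ` and acting on the generators by the prescribed formulas. -/
def IsALDeriv (Rm Rp : M2) (α : Bool) (p : ℕ) (D : Derivation ℚ A A) : Prop :=
  CommutesLam D ∧ GenEqs Rm Rp α p D

/-- The coefficient at `λ^m` (`m ∈ ℤ`) of `R_α(λ)`: `R_-(λ)` has only nonnegative powers,
`R_+(λ)` only nonpositive ones. -/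
def RExt (Rm Rp : M2) (α : Bool) (m : ℤ) : Matrix (Fin 2) (Fin 2) A :=
  if α then (if m ≤ 0 then coefM Rp (-m).toNat else 0)
  else (if 0 ≤ m then coefM Rm m.toNat else 0)

/-- Extension of a double sequence by zero to integer indices. -/
def OmExt (Om : ℕ → ℕ → A) (m k : ℤ) : A :=
  if 0 ≤ m ∧ 0 ≤ k then Om m.toNat k.toNat else 0

/-- The generating identity `tr(R_+(λ)R_+(μ)) - 1 = (λ-μ)² Σ_{p,q≥0} Ω_{p,q} λ^{-p-1} μ^{-q-1}`,
written coefficientwise: `m, k` are the exponents of `λ⁻¹, μ⁻¹`. -/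
def GenPP (Rp : M2) (Om : ℕ → ℕ → A) : Prop :=
  ∀ m k : ℤ,
    (if 0 ≤ m ∧ 0 ≤ k then (coefM Rp m.toNat * coefM Rp k.toNat).trace else 0)
      - (if m = 0 ∧ k = 0 then 1 else 0)
    = OmExt Om (m + 1) (k - 1) - 2 * OmExt Om m k + OmExt Om (m - 1) (k + 1)

/-- The generating identity `tr(R_-(λ)R_-(μ)) - 1 = (λ-μ)² Σ_{p,q≥0} Ω_{p,q} λ^{p-1} μ^{q-1}`,
written coefficientwise: `m, k` are the exponents of `λ, μ`. -/
def GenMM (Rm : M2) (Om : ℕ → ℕ → A) : Prop :=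
  ∀ m k : ℤ,
    (if 0 ≤ m ∧ 0 ≤ k then (coefM Rm m.toNat * coefM Rm k.toNat).trace else 0)
      - (if m = 0 ∧ k = 0 then 1 else 0)
    = OmExt Om (m - 1) (k + 1) - 2 * OmExt Om m k + OmExt Om (m + 1) (k - 1)

/-- The generating identity
`Σ_{p,q≥0} Ω_{p,q} λ^{-p-1} μ^{q-1} = -tr(R_+(λ)R_-(μ))·Σ_{m≥1} m μ^{m-1} λ^{-m-1} + λ^{-2}`
(the expansion of `-tr(R_+(λ)R_-(μ))/(λ-μ)² + 1/λ²` for `|λ| > |μ|`), together with the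
vanishing `Ω_{0,q} = Ω_{p,0} = 0`; `a` is the exponent of `λ⁻¹` and `b` the one of `μ`. -/
def GenPM (Rm Rp : M2) (Om : ℕ → ℕ → A) : Prop :=
  (∀ q, Om 0 q = 0) ∧ (∀ p, Om p 0 = 0) ∧
  ∀ a b : ℤ,
    OmExt Om (a - 1) (b + 1)
      = -(∑ m ∈ Finset.Icc (1 : ℤ) (min (a - 1) (b + 1)),
            m • (coefM Rp (a - m - 1).toNat * coefM Rm (b - m + 1).toNat).trace)
        + (if a = 2 ∧ b = 0 then 1 else 0)

/-- The generating identity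
`Σ_{p,q≥0} Ω_{q,p} λ^{p-1} μ^{-q-1} = -tr(R_-(λ)R_+(μ))·Σ_{m≥1} m λ^{m-1} μ^{-m-1} + μ^{-2}`
(the expansion of `-tr(R_-(λ)R_+(μ))/(λ-μ)² + 1/μ²` for `|μ| > |λ|`);
`c` is the exponent of `λ` and `d` the one of `μ⁻¹`. -/
def GenMP (Rm Rp : M2) (Om : ℕ → ℕ → A) : Prop :=
  ∀ c d : ℤ,
    OmExt Om (d - 1) (c + 1)
      = -(∑ m ∈ Finset.Icc (1 : ℤ) (min (c + 1) (d - 1)),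
            m • (coefM Rm (c - m + 1).toNat * coefM Rp (d - m - 1).toNat).trace)
        + (if c = 0 ∧ d = 2 then 1 else 0)

/-- `Om α β p q` is the full tau-structure family `Ω_{α,p;β,q}`
(with `α = + ↔ true`), as defined by the four generating identities,
where `Ω_{-,p;+,q} := Ω_{+,q;-,p}`. -/
def OmFam (Rm Rp : M2) (Om : Bool → Bool → ℕ → ℕ → A) : Prop :=
  GenPP Rp (Om true true) ∧ GenMM Rm (Om false false) ∧ GenPM Rm Rp (Om true false) ∧
  ∀ p q, Om false true p q = Om true false q p

/-- The multipoint quantities `Ω_{α_1,p_1;…;α_m,p_m}` (`m = k + 2` points), defined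
inductively from the two-point family by applying the derivations `D_{α,p}`. -/
def OmK (Om : Bool → Bool → ℕ → ℕ → A) (D : Bool → ℕ → Derivation ℚ A A) :
    (k : ℕ) → (Fin (k + 2) → Bool) → (Fin (k + 2) → ℕ) → A
  | 0, β, i => Om (β 0) (β 1) (i 0) (i 1)
  | k + 1, β, i =>
      D (β (Fin.last (k + 2))) (i (Fin.last (k + 2)))
        (OmK Om D k (fun j => β j.castSucc) (fun j => i j.castSucc))

/-- Multiplication of a formal series in `λ_1, …, λ_n` with exponents in `ℤⁿ`
(given by its coefficient function `F`) by a polynomial `P`, coefficientwise. -/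
def mulPoly {n : ℕ} (P : MvPolynomial (Fin n) A) (F : (Fin n → ℤ) → A)
    (m : Fin n → ℤ) : A :=
  ∑ d ∈ P.support, P.coeff d * F (fun j => m j - d j)

/-- The Vandermonde-type polynomial `∏_{i<j} (λ_i - λ_j)`. -/
def vandP (n : ℕ) : MvPolynomial (Fin n) A :=
  ∏ p ∈ Finset.univ.filter (fun p : Fin n × Fin n => p.1 < p.2),
    (MvPolynomial.X p.1 - MvPolynomial.X p.2)

/-- `i` and `j` are cyclically adjacent for `σ`, i.e. `{i,j} = {σ(t), σ(t+1)}` for some `t`. -/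
def cycAdj {n : ℕ} [NeZero n] (σ : Equiv.Perm (Fin n)) (i j : Fin n) : Prop :=
  ∃ t : Fin n, (σ t = i ∧ σ (t + 1) = j) ∨ (σ t = j ∧ σ (t + 1) = i)

/-- The polynomial `∏_{i<j} (λ_i - λ_j) / ∏_t (λ_{σ(t)} - λ_{σ(t+1)})`, up to the sign
`permSign σ`: the product of `(λ_i - λ_j)` over ordered non-cyclically-adjacent pairs. -/
def Qpoly {n : ℕ} [NeZero n] (σ : Equiv.Perm (Fin n)) : MvPolynomial (Fin n) A :=
  ∏ p ∈ Finset.univ.filter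
      (fun p : Fin n × Fin n => p.1 < p.2 ∧ ¬ cycAdj σ p.1 p.2),
    (MvPolynomial.X p.1 - MvPolynomial.X p.2)

/-- The sign relating `∏_t (λ_{σ(t)} - λ_{σ(t+1)})` with the corresponding product over
ordered pairs. -/
def permSign {n : ℕ} [NeZero n] (σ : Equiv.Perm (Fin n)) : A :=
  ∏ t : Fin n, (if σ (t + 1) < σ t then (-1 : A) else 1)

/-- The coefficient function of `tr(R_{α_{σ(1)}}(λ_{σ(1)}) ⋯ R_{α_{σ(n)}}(λ_{σ(n)}))`. -/
def Gfun (Rm Rp : M2) {n : ℕ} (β : Fin n → Bool) (σ : Equiv.Perm (Fin n))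
    (m : Fin n → ℤ) : A :=
  (List.ofFn (fun j : Fin n => RExt Rm Rp (β (σ j)) (m (σ j)))).prod.trace

/-- The coefficient function of the generating series
`Σ_{i_1,…,i_m ≥ 0} Ω_{α_1,i_1;…;α_m,i_m} / (λ_1^{α_1 i_1 + 1} ⋯ λ_m^{α_m i_m + 1})`. -/
def lhsF (Om : Bool → Bool → ℕ → ℕ → A) (D : Bool → ℕ → Derivation ℚ A A)
    {k : ℕ} (β : Fin (k + 2) → Bool) (m : Fin (k + 2) → ℤ) : A :=
  if (∀ j, if β j then m j ≤ -1 else -1 ≤ m j) then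
    OmK Om D k β (fun j => if β j then (-(m j) - 1).toNat else (m j + 1).toNat)
  else 0

/-! Write `U(λ) = U₀ + λU₁`. The `λ^m`-coefficient of `Λ(V)U - UV` is
`Λ(V_m)U₀ + Λ(V_{m-1})U₁ - U₀V_m - U₁V_{m-1}`, and the resolvent equation says that it vanishes
for the coefficients of `R_-`, and (after reversing the index, which swaps `U₀` and `U₁`) for those
of `R_+`. Truncating such a solution leaves a single nonzero coefficient, at the cut, and the
correction matrices in `V_{α,p}` only contribute at `λ⁰` and `λ¹`. Using `tr R_± = 1`, the result
is `((0, f), (λg, 0))` with `f, g` the Ablowitz–Ladik formulas, so the equation for `D(U)` says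
exactly `D r_n = f`, `D q_n = g`. A derivation commuting with `Λ` is determined by these two
values, and any two values are attained by `r_{n+i} ↦ Λ^i f`, `q_{n+i} ↦ Λ^i g`. -/

namespace AblowitzLadik

open MvPolynomial

def shiftBy (i : ℤ) : A →ₐ[ℚ] A :=
  rename fun bi : Bool × ℤ => (bi.1, bi.2 + i)

theorem shiftBy_zero (f : A) : shiftBy 0 f = f := by
  simp only [shiftBy, add_zero, Prod.mk.eta]
  exact rename_id_apply f

theorem Lam_shiftBy (i : ℤ) (f : A) : Lam (shiftBy i f) = shiftBy (i + 1) f := by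
  simp only [Lam, shiftBy, AlgHom.toRingHom_eq_coe, RingHom.coe_coe, rename_rename]
  congr 2
  funext bi
  simp [add_assoc]

theorem Lam_X (b : Bool) (i : ℤ) : Lam (X (b, i)) = X (b, i + 1) :=
  rename_X _ _

theorem Lam_injective : Function.Injective Lam :=
  rename_injective _ fun x y h => by simpa [Prod.ext_iff] using h

def shiftDerivation (fr fq : A) : Derivation ℚ A A :=
  mkDerivation ℚ fun bi => shiftBy bi.2 (if bi.1 then fq else fr)

theorem shiftDerivation_X (fr fq : A) (b : Bool) (i : ℤ) :
    shiftDerivation fr fq (X (b, i)) = shiftBy i (if b then fq else fr) :=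
  mkDerivation_X _ _ _

theorem shiftDerivation_rv (fr fq : A) : shiftDerivation fr fq (rv 0) = fr := by
  simp [rv, shiftDerivation_X, shiftBy_zero]

theorem shiftDerivation_qv (fr fq : A) : shiftDerivation fr fq (qv 0) = fq := by
  simp [qv, shiftDerivation_X, shiftBy_zero]

theorem commutesLam_shiftDerivation (fr fq : A) : CommutesLam (shiftDerivation fr fq) := by
  intro f
  induction f using MvPolynomial.induction_on with
  | C a => simp only [Lam, AlgHom.toRingHom_eq_coe, RingHom.coe_coe, rename_C, derivation_C,
      map_zero]
  | add f g hf hg => simp only [map_add, hf, hg]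
  | mul_X f bi hf =>
    obtain ⟨b, i⟩ := bi
    simp only [map_mul, Derivation.leibniz, smul_eq_mul, Lam_X, shiftDerivation_X, map_add, hf,
      Lam_shiftBy]

theorem derivation_eq_of_commutesLam {D D' : Derivation ℚ A A} (hD : CommutesLam D)
    (hD' : CommutesLam D') (hr : D (rv 0) = D' (rv 0)) (hq : D (qv 0) = D' (qv 0)) :
    D = D' := by
  refine derivation_ext fun ⟨b, i⟩ => ?_
  induction i using Int.induction_on with
  | zero => cases b; exacts [hr, hq]
  | succ n ih => rw [← Lam_X, hD, hD', ih]
  | pred n ih =>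
    apply Lam_injective
    rw [← hD, ← hD', Lam_X, sub_add_cancel, ih]

abbrev Mat : Type := Matrix (Fin 2) (Fin 2) A

def coefZ (R : M2) (s : ℤ) : Mat :=
  if 0 ≤ s then coefM R s.toNat else 0

theorem coefZ_natCast (R : M2) (n : ℕ) : coefZ R n = coefM R n := by
  simp [coefZ]

theorem coefZ_add (M N : M2) (s : ℤ) : coefZ (M + N) s = coefZ M s + coefZ N s := by
  unfold coefZ
  split_ifs
  · ext i j
    simp [coefM]
  · simp

theorem coefZ_mul_map_C (R : M2) (N : Mat) (s : ℤ) :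
    coefZ (R * N.map PowerSeries.C) s = coefZ R s * N := by
  unfold coefZ
  split_ifs
  · ext i j
    simp [coefM, Matrix.mul_apply, PowerSeries.coeff_mul_C]
  · simp

theorem coefZ_map_C_mul (R : M2) (N : Mat) (s : ℤ) :
    coefZ (N.map PowerSeries.C * R) s = N * coefZ R s := by
  unfold coefZ
  split_ifs
  · ext i j
    simp [coefM, Matrix.mul_apply, PowerSeries.coeff_C_mul]
  · simp

theorem coefZ_X_smul (M : M2) (s : ℤ) :
    coefZ ((PowerSeries.X : S) • M) s = coefZ M (s - 1) := by
  unfold coefZ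
  split_ifs with h₀ h₁ h₁
  · obtain ⟨n, rfl⟩ : ∃ n : ℕ, s = n + 1 := ⟨(s - 1).toNat, by omega⟩
    ext i j
    simp [coefM, PowerSeries.coeff_succ_X_mul, show ((n : ℤ) + 1).toNat = n + 1 by omega]
  · obtain rfl : s = 0 := by omega
    ext i j
    simp [coefM]
  · omega
  · rfl

theorem coefZ_map_LamS (R : M2) (s : ℤ) : coefZ (R.map LamS) s = (coefZ R s).map Lam := by
  unfold coefZ
  split_ifs
  · ext i j
    simp [coefM, LamS, PowerSeries.coeff_map]
  · simp

theorem coefM_trace (R : M2) (h : R 0 0 + R 1 1 = 1) (n : ℕ) :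
    coefM R n 0 0 + coefM R n 1 1 = if n = 0 then 1 else 0 := by
  simpa [coefM, PowerSeries.coeff_one] using congrArg (PowerSeries.coeff n) h

def laxCoef (N₀ N₁ : Mat) (V : ℤ → Mat) (m : ℤ) : Mat :=
  (V m).map Lam * N₀ + (V (m - 1)).map Lam * N₁ - N₀ * V m - N₁ * V (m - 1)

section laxCoef

variable (N₀ N₁ : Mat)

theorem laxCoef_sub (V W : ℤ → Mat) (m : ℤ) :
    laxCoef N₀ N₁ (V - W) m = laxCoef N₀ N₁ V m - laxCoef N₀ N₁ W m := by
  simp only [laxCoef, Pi.sub_apply, Matrix.map_sub _ (map_sub Lam), sub_mul, mul_sub]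
  abel

theorem laxCoef_comp_add (V : ℤ → Mat) (k m : ℤ) :
    laxCoef N₀ N₁ (fun m => V (m + k)) m = laxCoef N₀ N₁ V (m + k) := by
  simp only [laxCoef, sub_add_eq_add_sub]

theorem laxCoef_comp_sub (V : ℤ → Mat) (k m : ℤ) :
    laxCoef N₀ N₁ (fun m => V (k - m)) m = laxCoef N₁ N₀ V (k - m + 1) := by
  rw [laxCoef, laxCoef, add_sub_cancel_right, show k - (m - 1) = k - m + 1 by ring]
  abel

theorem laxCoef_single (E : Mat) (m : ℤ) :
    laxCoef N₀ N₁ (fun m => if m = 0 then E else 0) m =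
      if m = 0 then E.map Lam * N₀ - N₀ * E
      else if m = 1 then E.map Lam * N₁ - N₁ * E else 0 := by
  simp only [laxCoef]
  split_ifs <;> first | omega | simp_all

variable {N₀ N₁} {V : ℤ → Mat} (hV : ∀ s, laxCoef N₀ N₁ V s = 0)
include hV

theorem laxCoef_truncate_nonpos (m : ℤ) :
    laxCoef N₀ N₁ (fun m => if m ≤ 0 then V m else 0) m =
      if m = 1 then (V 0).map Lam * N₁ - N₁ * V 0 else 0 := by
  simp only [laxCoef]
  split_ifs <;> first | omega | exact hV m | simp_all

theorem laxCoef_truncate_nonneg (m : ℤ) :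
    laxCoef N₀ N₁ (fun m => if 0 ≤ m then V m else 0) m =
      if m = 0 then (V 0).map Lam * N₀ - N₀ * V 0 else 0 := by
  simp only [laxCoef]
  split_ifs <;> first | omega | exact hV m | simp_all

end laxCoef

theorem laxCoef_coefZ_eq_zero {R : M2} {N₀ N₁ : Mat}
    (h : R.map LamS * (N₀.map PowerSeries.C + (PowerSeries.X : S) • N₁.map PowerSeries.C) =
      (N₀.map PowerSeries.C + (PowerSeries.X : S) • N₁.map PowerSeries.C) * R) (s : ℤ) :
    laxCoef N₀ N₁ (coefZ R) s = 0 := by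
  have hs := congrArg (coefZ · s) h
  simp only [mul_add, add_mul, Matrix.mul_smul, Matrix.smul_mul, coefZ_add, coefZ_X_smul,
    coefZ_mul_map_C, coefZ_map_C_mul, coefZ_map_LamS] at hs
  rw [laxCoef, sub_sub, hs, sub_self]

theorem Umat_eq :
    Umat = U0.map PowerSeries.C + (PowerSeries.X : S) • U1.map PowerSeries.C := by
  ext i j
  fin_cases i <;> fin_cases j <;> simp [Umat, U0, U1, mul_comm]

theorem UmatInf_eq :
    UmatInf = U1.map PowerSeries.C + (PowerSeries.X : S) • U0.map PowerSeries.C := by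
  ext i j
  fin_cases i <;> fin_cases j <;> simp [UmatInf, U0, U1, mul_comm]

variable (Rm Rp : M2) (p : ℕ)

theorem Vc_false :
    Vc Rm Rp false p = (fun m => if m ≤ 0 then coefZ Rm (m + p) else 0) -
      fun m => if m = 0 then !![aC Rm Rp false p, bC Rm Rp false p; 0, 0] else 0 := by
  funext m
  simp only [Vc, coefZ, Pi.sub_apply, Bool.false_eq_true, if_false]
  congr 1
  split_ifs <;> first | rfl | omega

theorem Vc_true :
    Vc Rm Rp true p = (fun m => if 0 ≤ m then coefZ Rp (p - m) else 0) -
      fun m => if m = 0 then !![0, 0; cC Rm Rp true p, -aC Rm Rp true p] else 0 := by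
  funext m
  simp only [Vc, coefZ, Pi.sub_apply, if_true]
  congr 1
  split_ifs <;> first | rfl | omega

def flowR (α : Bool) : A :=
  if α then rv 0 * Lam (aC Rm Rp true p) + Lam (bC Rm Rp true p) + (if p = 0 then rv 0 else 0)
  else -(rv 0 * Lam (aC Rm Rp false p)) - Lam (bC Rm Rp false p)

def flowQ (α : Bool) : A :=
  if α then qv 0 * Lam (aC Rm Rp true p) - Lam (cC Rm Rp true p)
  else -(qv 0 * Lam (aC Rm Rp false p)) + Lam (cC Rm Rp false p) + (if p = 0 then qv 0 else 0)

theorem genEqs_iff (α : Bool) (D : Derivation ℚ A A) :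
    GenEqs Rm Rp α p D ↔ D (rv 0) = flowR Rm Rp p α ∧ D (qv 0) = flowQ Rm Rp p α := by
  cases α <;> rfl

def flowCoef (fr fq : A) (m : ℤ) : Mat :=
  if m = 0 then !![0, fr; 0, 0] else if m = 1 then !![0, 0; fq, 0] else 0

theorem ite_eq_mul_Lam_trace {R : M2} (htr : R 0 0 + R 1 1 = 1) (x : A) :
    (if p = 0 then x else 0) = x * (Lam (coefM R p 0 0) + Lam (coefM R p 1 1)) := by
  rw [← map_add, coefM_trace R htr p]
  split_ifs <;> simp

theorem laxCoef_Vc_false (h : Rm.map LamS * Umat = Umat * Rm) (htr : Rm 0 0 + Rm 1 1 = 1)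
    (m : ℤ) :
    laxCoef U0 U1 (Vc Rm Rp false p) m =
      flowCoef (flowR Rm Rp p false) (flowQ Rm Rp p false) m := by
  have hsol (s : ℤ) : laxCoef U0 U1 (fun m => coefZ Rm (m + p)) s = 0 := by
    rw [laxCoef_comp_add, laxCoef_coefZ_eq_zero (Umat_eq ▸ h)]
  rw [Vc_false, laxCoef_sub, laxCoef_truncate_nonpos hsol, laxCoef_single, flowCoef]
  split_ifs with h₁ h₀ h₀ <;> try omega
  · rw [zero_add, coefZ_natCast]
    ext i j : 1
    fin_cases i <;> fin_cases j <;>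
      simp [U1, flowQ, aC, bC, cC, ite_eq_mul_Lam_trace p htr, Matrix.mul_apply,
        Matrix.vecMul, dotProduct]
    ring
  · ext i j : 1
    fin_cases i <;> fin_cases j <;> simp [U0, flowR, aC, bC, Matrix.mul_apply]
    ring
  · simp

theorem laxCoef_Vc_true (h : Rp.map LamS * UmatInf = UmatInf * Rp) (htr : Rp 0 0 + Rp 1 1 = 1)
    (m : ℤ) :
    laxCoef U0 U1 (Vc Rm Rp true p) m =
      flowCoef (flowR Rm Rp p true) (flowQ Rm Rp p true) m := by
  have hsol (s : ℤ) : laxCoef U0 U1 (fun m => coefZ Rp (p - m)) s = 0 := by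
    rw [laxCoef_comp_sub, laxCoef_coefZ_eq_zero (UmatInf_eq ▸ h)]
  have haC : aC Rm Rp true p = -coefM Rp p 1 1 := by
    rw [aC, if_pos rfl, ← coefM_trace Rp htr p]
    ring
  rw [Vc_true, laxCoef_sub, laxCoef_truncate_nonneg hsol, laxCoef_single, flowCoef]
  split_ifs with h₀ h₁ <;> try omega
  · rw [sub_zero, coefZ_natCast]
    ext i j : 1
    fin_cases i <;> fin_cases j <;>
      simp [U0, flowR, haC, bC, cC, ite_eq_mul_Lam_trace p htr, Matrix.mul_apply,
        Matrix.vecMul, dotProduct]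
    all_goals ring
  · ext i j : 1
    fin_cases i <;> fin_cases j <;> simp [U1, flowQ, haC, cC, Matrix.mul_apply]
    ring
  · simp

theorem flowCoef_inj {fr fq fr' fq' : A} :
    flowCoef fr fq = flowCoef fr' fq' ↔ fr = fr' ∧ fq = fq' := by
  refine ⟨fun h => ⟨?_, ?_⟩, fun ⟨hr, hq⟩ => hr ▸ hq ▸ rfl⟩
  · simpa [flowCoef] using congrFun (congrFun (congrFun h 0) 0) 1
  · simpa [flowCoef] using congrFun (congrFun (congrFun h 1) 1) 0

theorem DUeq_iff_genEqs (hm : IsResMinus Rm) (hp : IsResPlus Rp) (α : Bool)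
    (D : Derivation ℚ A A) : DUeq Rm Rp α p D ↔ GenEqs Rm Rp α p D := by
  have hV : laxCoef U0 U1 (Vc Rm Rp α p) = flowCoef (flowR Rm Rp p α) (flowQ Rm Rp p α) := by
    funext m
    cases α
    exacts [laxCoef_Vc_false Rm Rp p hm.1 hm.2.2.1 m, laxCoef_Vc_true Rm Rp p hp.1 hp.2.2.1 m]
  change (∀ m, DUcoef D m = laxCoef U0 U1 (Vc Rm Rp α p) m) ↔ _
  rw [hV, ← funext_iff, genEqs_iff]
  exact flowCoef_inj

end AblowitzLadik

open AblowitzLadik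

/-- For each `α ∈ {+,-}` and `p ≥ 0` there is a unique derivation of `𝒜` commuting with `Λ`
and satisfying `D(U(λ)) = Λ(V_{α,p}(λ))·U(λ) - U(λ)·V_{α,p}(λ)`; moreover any such derivation
acts on the generators `q_n, r_n` by the explicit Ablowitz–Ladik formulas. -/
theorem exists_unique_AL_derivation (Rm Rp : M2)
    (hm : IsResMinus Rm) (hp : IsResPlus Rp) (α : Bool) (p : ℕ) :
    (∃! D : Derivation ℚ A A, CommutesLam D ∧ DUeq Rm Rp α p D) ∧
    (∀ D : Derivation ℚ A A, CommutesLam D → DUeq Rm Rp α p D →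
      GenEqs Rm Rp α p D) := by
  have hDU := DUeq_iff_genEqs Rm Rp p hm hp α
  set D₀ := shiftDerivation (flowR Rm Rp p α) (flowQ Rm Rp p α)
  have hD₀ : CommutesLam D₀ := commutesLam_shiftDerivation _ _
  have hD₀r : D₀ (rv 0) = flowR Rm Rp p α := shiftDerivation_rv _ _
  have hD₀q : D₀ (qv 0) = flowQ Rm Rp p α := shiftDerivation_qv _ _
  refine ⟨⟨D₀, ⟨hD₀, (hDU D₀).2 ((genEqs_iff ..).2 ⟨hD₀r, hD₀q⟩)⟩, ?_⟩,
    fun D _ h => (hDU D).1 h⟩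
  rintro D ⟨hD, hDeq⟩
  obtain ⟨hr, hq⟩ := (genEqs_iff ..).1 ((hDU D).1 hDeq)
  exact derivation_eq_of_commutesLam hD hD₀ (hr.trans hD₀r.symm) (hq.trans hD₀q.symm)
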